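/- arXiv:0909.4437 — 6 statements merged into one kernel-verified Lean document; each statement's English description precedes it below -/
import Mathlib

section
/- For every profile of the stable marriage problem (n men, n women, each with a strict linear order over the other gender) there exists a stable matching, i.e., a bijection between men and women with no blocking pair. -/
open Equiv

/-- A strict linear order over `Fin n`, encoded as the bijection sending each
position (position `0` = most preferred) to the element occupying that position. -/
abbrev Pref (n : ℕ) := Equiv.Perm (Fin n)

/-- `prefers r a b` : the order `r` strictly prefers `a` to `b`. -/
def prefers {n : ℕ} (r : Pref n) (a b : Fin n) : Prop := r.symm a < r.symm b

/-- `weaklyPrefers r a b` : the order `r` weakly prefers `a` to `b`. -/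
def weaklyPrefers {n : ℕ} (r : Pref n) (a b : Fin n) : Prop := r.symm a ≤ r.symm b

/-- A profile of the stable marriage problem with `n` men and `n` women:
each man has a strict linear order over the women and vice versa. -/
structure Profile (n : ℕ) where
  menPref : Fin n → Pref n
  womenPref : Fin n → Pref n

/-- A matching is a bijection from the men to the women. -/
abbrev Matching (n : ℕ) := Equiv.Perm (Fin n)

/-- `m` and `w` form a blocking pair for `μ`. -/
def IsBlockingPair {n : ℕ} (p : Profile n) (μ : Matching n) (m w : Fin n) : Prop :=
  μ m ≠ w ∧ prefers (p.menPref m) w (μ m) ∧ prefers (p.womenPref w) m (μ.symm w)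

/-- A matching is stable when it admits no blocking pair. -/
def IsStable {n : ℕ} (p : Profile n) (μ : Matching n) : Prop :=
  ∀ m w, ¬ IsBlockingPair p μ m w

/-- A stable matching in which every man is matched to his best stable partner. -/
def ManOptimal {n : ℕ} (p : Profile n) (μs : Matching n) : Prop :=
  IsStable p μs ∧ ∀ μ, IsStable p μ → ∀ m, weaklyPrefers (p.menPref m) (μs m) (μ m)

/-- A stable matching in which every woman is matched to her best stable partner. -/
def WomanOptimal {n : ℕ} (p : Profile n) (μs : Matching n) : Prop :=
  IsStable p μs ∧ ∀ μ, IsStable p μ → ∀ w, weaklyPrefers (p.womenPref w) (μs.symm w) (μ.symm w)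

/-- The gender-swapped profile. -/
def swapProfile {n : ℕ} (p : Profile n) : Profile n := ⟨p.womenPref, p.menPref⟩

/-- The rank list of a strict linear order: elements in decreasing order of preference. -/
def rankList {n : ℕ} (r : Pref n) : List (Fin n) := List.ofFn r

/-- The candidate signature vector of the family `L` after reindexing by `π`
and relabeling the alternatives by `ρ`. -/
def sigCandidate {n : ℕ} (L : Fin n → Pref n) (π ρ : Equiv.Perm (Fin n)) : List (Fin n) :=
  (List.ofFn (fun i => rankList ((L (π i)).trans ρ))).flatten

/-- The signature of a family of strict linear orders: the lexicographically least
concatenation of rank lists over all reindexings and relabelings. -/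
def signature {n : ℕ} (L : Fin n → Pref n) : List (Fin n) :=
  ((Finset.univ : Finset (Equiv.Perm (Fin n) × Equiv.Perm (Fin n))).image
      (fun q => sigCandidate L q.1 q.2)).min'
    (Finset.Nonempty.image ⟨(1, 1), Finset.mem_univ _⟩ _)


/-!
Gale–Shapley deferred acceptance. A state is the vector `c` of positions the men have reached in
their lists, man `m` proposing to his `c m`-th choice; it is admissible when every woman a man ranks
above his current proposal holds a proposal she prefers to him, i.e. every past rejection was
justified. If two men propose to the same woman, the one she likes less moves down his list: he cannot
be at its end, since then every woman would already hold a proposal, and the new state is again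
admissible and pointwise larger. So a maximal admissible state has pairwise distinct proposals, and
its admissibility says exactly that the induced matching has no blocking pair.
-/
lemma prefers.trans {n : ℕ} {r : Pref n} {a b c : Fin n} (hab : prefers r a b) (hbc : prefers r b c) :
    prefers r a c :=
  lt_trans hab hbc

lemma prefers.asymm {n : ℕ} {r : Pref n} {a b : Fin n} (hab : prefers r a b) : ¬ prefers r b a :=
  lt_asymm hab

lemma prefers_or_prefers_of_ne {n : ℕ} (r : Pref n) {a b : Fin n} (h : a ≠ b) :
    prefers r a b ∨ prefers r b a :=
  lt_or_gt_of_ne (r.symm.injective.ne h)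

lemma prefers_apply_iff {n : ℕ} (r : Pref n) (a : Fin n) (k : Fin n) :
    prefers r a (r k) ↔ r.symm a < k := by
  rw [prefers, Equiv.symm_apply_apply]

namespace GaleShapley

variable {n : ℕ} (p : Profile n)

def proposal (c : Fin n → Fin n) (m : Fin n) : Fin n := p.menPref m (c m)

def Admissible (c : Fin n → Fin n) : Prop :=
  ∀ m w, prefers (p.menPref m) w (proposal p c m) →
    ∃ m', proposal p c m' = w ∧ prefers (p.womenPref w) m' m

variable {p}

lemma admissible_start : Admissible p (fun m => ⟨0, m.pos⟩) := by
  intro m w h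
  rw [proposal, prefers_apply_iff] at h
  exact absurd (Fin.lt_def.mp h) (Nat.not_lt_zero _)

lemma proposal_update_of_ne {c : Fin n → Fin n} {m₀ m : Fin n} (k : Fin n) (h : m ≠ m₀) :
    proposal p (Function.update c m₀ k) m = proposal p c m := by
  rw [proposal, proposal, Function.update_of_ne h]

lemma Admissible.surjective_of_last {c : Fin n → Fin n} (hc : Admissible p c) {m : Fin n}
    (hlast : (c m).val + 1 = n) : Function.Surjective (proposal p c) := by
  intro w
  by_cases hw : w = proposal p c m
  · exact ⟨m, hw.symm⟩
  · have hrank : (p.menPref m).symm w < c m := by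
      have hne : (p.menPref m).symm w ≠ c m := fun h => hw (by rw [proposal, ← h, Equiv.apply_symm_apply])
      have := ((p.menPref m).symm w).isLt
      exact lt_of_le_of_ne (Fin.mk_le_mk.mpr (by omega)) hne
    obtain ⟨m', hm', -⟩ := hc m w ((prefers_apply_iff _ _ _).mpr hrank)
    exact ⟨m', hm'⟩

lemma Admissible.advance {c : Fin n → Fin n} (hc : Admissible p c) {m₁ m₂ : Fin n} (hne : m₁ ≠ m₂)
    (hsame : proposal p c m₁ = proposal p c m₂)
    (hrej : prefers (p.womenPref (proposal p c m₂)) m₁ m₂) (hnext : (c m₂).val + 1 < n) :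
    Admissible p (Function.update c m₂ ⟨(c m₂).val + 1, hnext⟩) := by
  set c' := Function.update c m₂ ⟨(c m₂).val + 1, hnext⟩
  -- only `m₂`'s proposal changes, and the woman he leaves keeps `m₁`, whom she prefers to him
  have upgrade : ∀ m w m', proposal p c m' = w → prefers (p.womenPref w) m' m →
      ∃ m', proposal p c' m' = w ∧ prefers (p.womenPref w) m' m := by
    intro m w m' hm' hpref
    by_cases h : m' = m₂
    · subst h hm'
      exact ⟨m₁, by rw [proposal_update_of_ne _ hne, hsame], hrej.trans hpref⟩
    · exact ⟨m', by rw [proposal_update_of_ne _ h, hm'], hpref⟩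
  intro m w hw
  by_cases hm : m = m₂
  · subst hm
    rw [proposal, show c' m = _ from Function.update_self .., prefers_apply_iff] at hw
    rcases lt_or_eq_of_le (Fin.le_def.mpr (Nat.lt_succ_iff.mp hw)) with h | h
    · obtain ⟨m', hm', hpref⟩ := hc m w ((prefers_apply_iff _ _ _).mpr h)
      exact upgrade m w m' hm' hpref
    · have hw : proposal p c m = w := by rw [proposal, ← h, Equiv.apply_symm_apply]
      subst hw
      exact upgrade m _ m₁ hsame hrej
  · rw [proposal_update_of_ne _ hm] at hw
    obtain ⟨m', hm', hpref⟩ := hc m w hw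
    exact upgrade m w m' hm' hpref

lemma Admissible.exists_lt_of_not_injective {c : Fin n → Fin n} (hc : Admissible p c)
    (hinj : ¬ Function.Injective (proposal p c)) : ∃ c', Admissible p c' ∧ c < c' := by
  obtain ⟨m₁, m₂, hsame, hne⟩ := Function.not_injective_iff.mp hinj
  wlog hrej : prefers (p.womenPref (proposal p c m₂)) m₁ m₂ generalizing m₁ m₂
  · refine this m₂ m₁ hsame.symm hne.symm ?_
    rw [hsame]
    exact (prefers_or_prefers_of_ne _ hne).resolve_left hrej
  have hnext : (c m₂).val + 1 < n :=
    lt_of_le_of_ne (c m₂).isLt fun hlast =>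
      hinj (Finite.injective_iff_surjective.mpr (hc.surjective_of_last hlast))
  exact ⟨_, hc.advance hne hsame hrej hnext, lt_update_self_iff.mpr (Nat.lt_succ_self _)⟩

variable (p) in
lemma exists_admissible_injective : ∃ c, Admissible p c ∧ Function.Injective (proposal p c) := by
  obtain ⟨c, hmax⟩ := (Set.toFinite {c | Admissible p c}).exists_maximal ⟨_, admissible_start⟩
  refine ⟨c, hmax.prop, by_contra fun hinj => ?_⟩
  obtain ⟨c', hc', hlt⟩ := hmax.prop.exists_lt_of_not_injective hinj
  exact hmax.not_gt hc' hlt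

lemma Admissible.isStable {c : Fin n → Fin n} (hc : Admissible p c) (μ : Matching n)
    (hμ : ∀ m, μ m = proposal p c m) : IsStable p μ := by
  rintro m w ⟨-, hm, hw⟩
  rw [hμ] at hm
  obtain ⟨m', hm', hpref⟩ := hc m w hm
  rw [μ.symm_apply_eq.mpr (by rw [hμ, hm'])] at hw
  exact hpref.asymm hw

end GaleShapley

theorem stable_matching_exists_general (n : ℕ) (p : Profile n) :
    ∃ μ : Matching n, IsStable p μ := by
  obtain ⟨c, hc, hinj⟩ := GaleShapley.exists_admissible_injective p
  exact ⟨Equiv.ofBijective _ (Finite.injective_iff_bijective.mp hinj), hc.isStable _ fun _ => rfl⟩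

/-- For every profile of the stable marriage problem there exists a stable matching. -/
theorem stable_matching_exists (n : ℕ) (hn : 1 ≤ n) (p : Profile n) :
    ∃ μ : Matching n, IsStable p μ :=
  stable_matching_exists_general n p
end

section
/- For every profile of the stable marriage problem there exists a man-optimal stable matching: a stable matching μ* such that for every stable matching μ and every man m, m weakly prefers μ* m to μ m. Moreover this man-optimal stable matching is unique. -/
open Equiv

section GS

variable {n : ℕ}

/-- Current proposal of man `m` given rejection counts `r`. -/
def gsCurr (p : Profile n) (r : Fin n → Fin n) (m : Fin n) : Fin n := p.menPref m (r m)

/-- Invariant of the deferred-acceptance process. -/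
def GSInv (p : Profile n) (r : Fin n → Fin n) : Prop :=
  (∀ m k, k < r m → ∃ m', gsCurr p r m' = p.menPref m k ∧
      prefers (p.womenPref (p.menPref m k)) m' m) ∧
  (∀ μ : Matching n, IsStable p μ → ∀ m, r m ≤ (p.menPref m).symm (μ m))

lemma step_core (p : Profile n) (r : Fin n → Fin n) (hI : GSInv p r)
    (m₁ m₂ : Fin n) (hne : m₂ ≠ m₁) (hc : gsCurr p r m₂ = gsCurr p r m₁)
    (hpref : prefers (p.womenPref (gsCurr p r m₁)) m₂ m₁) :
    ∃ r', GSInv p r' ∧ ∑ m, (r m : ℕ) < ∑ m, (r' m : ℕ) := by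
  have hlt : (r m₁ : ℕ) + 1 < n := by
    by_contra hcon
    have hmax : ∀ k : Fin n, k ≠ r m₁ → k < r m₁ := by
      intro k hk
      have h1 := k.isLt
      have h2 : (k : ℕ) ≠ (r m₁ : ℕ) := fun h => hk (Fin.ext h)
      exact Fin.lt_def.mpr (by omega)
    have hall : ∀ w : Fin n, ∃ m', gsCurr p r m' = w ∧ prefers (p.womenPref w) m' m₁ := by
      intro w
      by_cases hw : w = gsCurr p r m₁
      · exact ⟨m₂, by rw [hc, hw], hw ▸ hpref⟩
      · have hk : (p.menPref m₁).symm w < r m₁ := by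
          apply hmax
          intro he
          apply hw
          have : p.menPref m₁ ((p.menPref m₁).symm w) = p.menPref m₁ (r m₁) := by rw [he]
          simpa [gsCurr] using this
        obtain ⟨m', h1, h2⟩ := hI.1 m₁ ((p.menPref m₁).symm w) hk
        rw [Equiv.apply_symm_apply] at h1 h2
        exact ⟨m', h1, h2⟩
    choose f hf1 hf2 using hall
    have hfi : Function.Injective f := by
      intro a b hab
      rw [← hf1 a, ← hf1 b, hab]
    obtain ⟨w, hw⟩ := Finite.surjective_of_injective hfi m₁
    have := hf2 w
    rw [hw] at this
    exact lt_irrefl _ this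
  set w : Fin n := gsCurr p r m₁ with hwdef
  refine ⟨Function.update r m₁ ⟨(r m₁ : ℕ) + 1, hlt⟩, ⟨?_, ?_⟩, ?_⟩
  · -- first invariant
    intro m k hk
    set r' := Function.update r m₁ ⟨(r m₁ : ℕ) + 1, hlt⟩ with hr'
    have hcur : ∀ m', m' ≠ m₁ → gsCurr p r' m' = gsCurr p r m' := by
      intro m' hm'
      simp [gsCurr, r', Function.update_of_ne hm']
    by_cases hm : m = m₁
    · subst hm
      have hk' : (k : ℕ) < (r m : ℕ) + 1 := by
        have := Fin.lt_def.mp hk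
        simpa [r', Function.update_self] using this
      rcases Nat.lt_or_ge (k : ℕ) (r m : ℕ) with h | h
      · obtain ⟨m', h1, h2⟩ := hI.1 m k (Fin.lt_def.mpr h)
        have hm'ne : m' ≠ m := by
          intro he
          rw [he] at h1
          have h3 : r m = k := (p.menPref m).injective h1
          have := congrArg Fin.val h3
          omega
        exact ⟨m', by rw [hcur m' hm'ne, h1], h2⟩
      · have hkk : k = r m := Fin.ext (by omega)
        subst hkk
        refine ⟨m₂, by rw [hcur m₂ hne, hc, hwdef]; rfl, hpref⟩
    · have hk' : k < r m := by
        have := Fin.lt_def.mp hk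
        exact Fin.lt_def.mpr (by simpa [r', Function.update_of_ne hm] using this)
      obtain ⟨m', h1, h2⟩ := hI.1 m k hk'
      by_cases hm' : m' = m₁
      · subst hm'
        have hww : w = p.menPref m k := by rw [hwdef, h1]
        refine ⟨m₂, by rw [hcur m₂ hne, hc, ← hww], ?_⟩
        rw [← hww]
        exact lt_trans hpref (hww ▸ h2)
      · exact ⟨m', by rw [hcur m' hm', h1], h2⟩
  · -- second invariant
    intro μ hμ m
    by_cases hm : m = m₁
    · subst hm
      have hold := hI.2 μ hμ m
      have hne2 : (p.menPref m).symm (μ m) ≠ r m := by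
        intro he
        have hμm : μ m = w := by
          rw [hwdef]
          have : p.menPref m ((p.menPref m).symm (μ m)) = p.menPref m (r m) := by rw [he]
          simpa [gsCurr] using this
        -- (m₂, w) is a blocking pair for μ
        apply hμ m₂ w
        refine ⟨?_, ?_, ?_⟩
        · intro he2
          exact hne (μ.injective (by rw [he2, hμm]))
        · have h2 : (p.menPref m₂).symm w = r m₂ := by
            have : p.menPref m₂ (r m₂) = w := hc
            rw [← this, Equiv.symm_apply_apply]
          have h3 := hI.2 μ hμ m₂
          have h4 : (p.menPref m₂).symm (μ m₂) ≠ r m₂ := by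
            intro he2
            apply hne (μ.injective _)
            have : p.menPref m₂ ((p.menPref m₂).symm (μ m₂)) = p.menPref m₂ (r m₂) := by
              rw [he2]
            rw [hμm]
            rw [Equiv.apply_symm_apply] at this
            rw [this]; exact hc
          rw [prefers, h2]
          exact lt_of_le_of_ne h3 (Ne.symm h4)
        · have : μ.symm w = m := by rw [← hμm, Equiv.symm_apply_apply]
          rw [this]
          exact hpref
      rw [Fin.le_def]
      simp only [Function.update_self]
      have := Fin.le_def.mp hold
      have hne3 : (r m : ℕ) ≠ ((p.menPref m).symm (μ m) : ℕ) := fun h =>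
        hne2 (Fin.ext h.symm)
      simpa using by omega
    · rw [Function.update_of_ne hm]
      exact hI.2 μ hμ m
  · -- sum strictly increases
    have h1 : ∀ m : Fin n, ((Function.update r m₁ ⟨(r m₁ : ℕ) + 1, hlt⟩ m : Fin n) : ℕ)
        = (r m : ℕ) + (if m = m₁ then 1 else 0) := by
      intro m
      by_cases hm : m = m₁
      · subst hm; simp
      · simp [Function.update_of_ne hm, hm]
    calc ∑ m, (r m : ℕ) < ∑ m, (r m : ℕ) + 1 := Nat.lt_succ_self _
      _ = ∑ m, ((r m : ℕ) + if m = m₁ then 1 else 0) := by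
          rw [Finset.sum_add_distrib, Finset.sum_ite_eq' Finset.univ m₁ (fun _ => 1)]
          simp
      _ = _ := by rw [← Finset.sum_congr rfl (fun m _ => h1 m)]

lemma gs_iter (hn : 1 ≤ n) (p : Profile n) : ∀ (k : ℕ) (r : Fin n → Fin n), GSInv p r →
    n * n ≤ (∑ m, (r m : ℕ)) + k →
    ∃ r', GSInv p r' ∧ Function.Injective (gsCurr p r') := by
  intro k
  induction k with
  | zero =>
    intro r hI hb
    exfalso
    have hle : ∑ m, (r m : ℕ) ≤ ∑ _m : Fin n, (n - 1) :=
      Finset.sum_le_sum (fun m _ => by have := (r m).isLt; omega)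
    simp only [Finset.sum_const, Finset.card_univ, Fintype.card_fin, smul_eq_mul] at hle
    have : n * (n - 1) < n * n := by
      rcases Nat.exists_eq_add_of_le hn with ⟨m, rfl⟩
      have h1 : 1 + m - 1 = m := by omega
      rw [h1]
      nlinarith
    omega
  | succ k ih =>
    intro r hI hb
    by_cases hinj : Function.Injective (gsCurr p r)
    · exact ⟨r, hI, hinj⟩
    · rw [Function.not_injective_iff] at hinj
      obtain ⟨a, b, hab, hne⟩ := hinj
      have hwne : (p.womenPref (gsCurr p r b)).symm a ≠ (p.womenPref (gsCurr p r b)).symm b :=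
        fun h => hne ((p.womenPref (gsCurr p r b)).symm.injective h)
      rcases lt_or_gt_of_ne hwne with h | h
      · -- woman prefers a over b : b is rejected
        obtain ⟨r', hI', hsum⟩ := step_core p r hI b a hne hab h
        exact ih r' hI' (by omega)
      · -- woman prefers b over a : a is rejected
        obtain ⟨r', hI', hsum⟩ := step_core p r hI a b (Ne.symm hne)
          hab.symm (by rw [hab]; exact h)
        exact ih r' hI' (by omega)

end GS

/-- For every profile there exists a unique man-optimal stable matching. -/
theorem man_optimal_exists_unique (n : ℕ) (hn : 1 ≤ n) (p : Profile n) :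
    ∃! μs : Matching n, ManOptimal p μs := by
  obtain ⟨r, hI, hinj⟩ := gs_iter hn p (n * n) (fun _ => ⟨0, hn⟩)
    ⟨fun m k hk => absurd hk (by simp [Fin.lt_def]),
     fun μ _ m => Fin.le_def.mpr (Nat.zero_le _)⟩
    (by simp)
  set μs : Matching n :=
    Equiv.ofBijective (gsCurr p r) (Finite.injective_iff_bijective.mp hinj) with hμsdef
  have hμs : ∀ m, μs m = gsCurr p r m := fun m => rfl
  have hrank : ∀ m, (p.menPref m).symm (μs m) = r m := by
    intro m
    rw [hμs]
    exact Equiv.symm_apply_apply _ _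
  have hstable : IsStable p μs := by
    intro m w hbp
    obtain ⟨h1, h2, h3⟩ := hbp
    rw [prefers, hrank] at h2
    obtain ⟨m', hc1, hc2⟩ := hI.1 m ((p.menPref m).symm w) h2
    rw [Equiv.apply_symm_apply] at hc1 hc2
    have hm' : μs.symm w = m' := by
      apply μs.injective
      rw [Equiv.apply_symm_apply, hμs, hc1]
    rw [prefers, hm'] at h3
    exact lt_asymm h3 hc2
  have hopt : ∀ μ, IsStable p μ → ∀ m, weaklyPrefers (p.menPref m) (μs m) (μ m) := by
    intro μ hμ m
    rw [weaklyPrefers, hrank]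
    exact hI.2 μ hμ m
  refine ⟨μs, ⟨hstable, hopt⟩, ?_⟩
  intro ν hν
  apply Equiv.ext
  intro m
  have h1 := hν.2 μs hstable m
  have h2 := hopt ν hν.1 m
  have h3 : (p.menPref m).symm (ν m) = (p.menPref m).symm (μs m) :=
    le_antisymm h1 h2
  exact (p.menPref m).symm.injective h3
end

section
/- The man-optimal stable matching is woman-pessimal: if μ* is a stable matching such that for every stable matching μ and every man m, m weakly prefers μ* m to μ m, then for every stable matching μ and every woman w, w weakly prefers μ⁻¹ w to μ*⁻¹ w. -/
open Equiv

/-- The man-optimal stable matching is woman-pessimal: every woman weakly prefers her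
partner in any stable matching to her partner in the man-optimal stable matching. -/
theorem man_optimal_is_woman_pessimal (n : ℕ) (hn : 1 ≤ n) (p : Profile n)
    (μs : Matching n) (hopt : ManOptimal p μs) :
    ∀ μ : Matching n, IsStable p μ → ∀ w : Fin n,
      weaklyPrefers (p.womenPref w) (μ.symm w) (μs.symm w) := by
  intro μ hμ w
  set m := μs.symm w with hm
  have hμsm : μs m = w := μs.apply_symm_apply w
  by_cases heq : μ m = w
  · unfold weaklyPrefers
    rw [← heq, Equiv.symm_apply_apply, heq, hm]
  · have hpref : prefers (p.menPref m) w (μ m) := by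
      have hw := hopt.2 μ hμ m
      unfold weaklyPrefers at hw
      rw [hμsm] at hw
      unfold prefers
      refine lt_of_le_of_ne hw ?_
      intro h
      exact heq (((p.menPref m).symm.injective h).symm)
    have hnb := hμ m w
    unfold IsBlockingPair at hnb
    push_neg at hnb
    have := hnb heq hpref
    unfold prefers at this
    unfold weaklyPrefers
    exact le_of_not_gt this
end

section
/- For every profile there exists a woman-optimal stable matching, and every woman's partner in any stable matching lies weakly between her two extreme stable partners: for every stable matching μ and every woman w, w weakly prefers her woman-optimal partner to μ⁻¹ w, and weakly prefers μ⁻¹ w to her man-optimal partner. -/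
open Equiv

/-! Following Adachi, deferred acceptance is a fixed-point iteration. Given aspiration ranks of the
men, each woman's best available man is the best one who weakly prefers her to his aspiration;
symmetrically for the men. Both responses are antitone, so their composite is a monotone map on
the complete lattice of men's aspiration vectors. Its least fixed point is realised by a stable
matching, and every stable matching gives a fixed point, so that matching is man-optimal.
Exchanging the sexes yields the woman-optimal matching, and a woman who preferred her man-optimal
partner `m` to her partner in a stable matching `μ` would block `μ` together with `m`, since `m`
weakly prefers her to `μ m`. -/

namespace StableMarriage

variable {n : ℕ}

/-- Ranks live in `Fin (n + 1)`, whose top `Fin.last n` stands for "nobody", so that vectors of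
ranks form a complete lattice. -/
def rank (r : Pref n) (a : Fin n) : Fin (n + 1) := (r.symm a).castSucc

lemma rank_ne_top (r : Pref n) (a : Fin n) : rank r a ≠ ⊤ :=
  (Fin.castSucc_lt_last _).ne

lemma rank_injective (r : Pref n) : Function.Injective (rank r) :=
  (Fin.castSucc_injective n).comp r.symm.injective

lemma exists_rank_eq_of_ne_top (r : Pref n) {k : Fin (n + 1)} (hk : k ≠ ⊤) :
    ∃ a, k = rank r a :=
  ⟨r (k.castPred hk), by
    rw [rank, Equiv.symm_apply_apply]; exact (Fin.castSucc_castPred k hk).symm⟩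

lemma rank_le_rank_iff {r : Pref n} {a b : Fin n} : rank r a ≤ rank r b ↔ weaklyPrefers r a b :=
  Fin.castSucc_le_castSucc_iff

lemma rank_lt_rank_iff {r : Pref n} {a b : Fin n} : rank r a < rank r b ↔ prefers r a b :=
  Fin.castSucc_lt_castSucc_iff

section bestAvailable

variable (P Q : Fin n → Pref n)

def bestAvailable (x : Fin n → Fin (n + 1)) (j : Fin n) : Fin (n + 1) :=
  ({i | rank (Q i) j ≤ x i} : Finset (Fin n)).inf (rank (P j))

variable {P Q} {x y : Fin n → Fin (n + 1)}

lemma bestAvailable_antitone : Antitone (bestAvailable P Q) := fun _ _ hxx' _ =>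
  Finset.inf_mono fun i hi => by
    simp only [Finset.mem_filter, Finset.mem_univ, true_and] at hi ⊢
    exact hi.trans (hxx' i)

lemma bestAvailable_le {i j : Fin n} (h : rank (Q i) j ≤ x i) :
    bestAvailable P Q x j ≤ rank (P j) i :=
  Finset.inf_le (by simpa using h)

lemma exists_eq_bestAvailable {j : Fin n} (h : bestAvailable P Q x j ≠ ⊤) :
    ∃ i, rank (Q i) j ≤ x i ∧ bestAvailable P Q x j = rank (P j) i := by
  have hne : ({i | rank (Q i) j ≤ x i} : Finset (Fin n)).Nonempty := by
    contrapose! h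
    simp [bestAvailable, h]
  obtain ⟨i, hi, hinf⟩ := Finset.exists_mem_eq_inf _ hne (rank (P j))
  exact ⟨i, (Finset.mem_filter.1 hi).2, hinf⟩

lemma rank_eq_of_rank_eq (hx : bestAvailable P Q y = x) (hy : bestAvailable Q P x = y)
    {i j : Fin n} (h : x i = rank (P i) j) : y j = rank (Q j) i := by
  rw [← hx] at h
  obtain ⟨j', hj', hbest⟩ := exists_eq_bestAvailable (h ▸ rank_ne_top _ _)
  obtain rfl : j' = j := rank_injective _ (hbest.symm.trans h)
  refine le_antisymm ?_ hj'
  rw [← hy]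
  exact bestAvailable_le (by rw [← hx, h])

lemma ne_top_of_bestAvailable_eq (hx : bestAvailable P Q y = x) (hy : bestAvailable Q P x = y)
    (i : Fin n) : x i ≠ ⊤ := by
  intro hi
  -- Were `i` left over, every agent of the other side would hold a partner, and these partners
  -- would exhaust `i`'s side.
  have hy_ne_top : ∀ j, y j ≠ ⊤ := fun j hj =>
    rank_ne_top (P i) j (top_le_iff.1 (hi ▸ hx ▸ bestAvailable_le (hj ▸ le_top)))
  choose g hg using fun j => exists_rank_eq_of_ne_top (Q j) (hy_ne_top j)
  have hg' : ∀ j, x (g j) = rank (P (g j)) j := fun j => rank_eq_of_rank_eq hy hx (hg j)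
  have g_injective : Function.Injective g := fun j j' hjj' =>
    rank_injective (P (g j)) ((hg' j).symm.trans (hjj' ▸ hg' j'))
  obtain ⟨j, rfl⟩ := Finite.injective_iff_surjective.1 g_injective i
  exact rank_ne_top _ _ (hg' j ▸ hi)

lemma exists_perm_of_bestAvailable_eq (hx : bestAvailable P Q y = x)
    (hy : bestAvailable Q P x = y) :
    ∃ μ : Equiv.Perm (Fin n), ∀ i, x i = rank (P i) (μ i) := by
  choose f hf using fun i => exists_rank_eq_of_ne_top (P i) (ne_top_of_bestAvailable_eq hx hy i)
  have f_injective : Function.Injective f := fun i i' hii' =>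
    rank_injective (Q (f i))
      ((rank_eq_of_rank_eq hx hy (hf i)).symm.trans (hii' ▸ rank_eq_of_rank_eq hx hy (hf i')))
  exact ⟨Equiv.ofBijective f (Finite.injective_iff_bijective.1 f_injective), hf⟩

end bestAvailable

variable {p : Profile n} {μ : Matching n}

lemma isStable_swapProfile (hμ : IsStable p μ) : IsStable (swapProfile p) μ.symm :=
  fun w m ⟨hne, hwm, hmw⟩ =>
    hμ m w ⟨fun h => hne (by rw [← h, Equiv.symm_apply_apply]), hmw, hwm⟩

lemma isStable_of_bestAvailable_eq {x y : Fin n → Fin (n + 1)}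
    (hx : bestAvailable p.menPref p.womenPref y = x)
    (hy : bestAvailable p.womenPref p.menPref x = y)
    (hμ : ∀ m, x m = rank (p.menPref m) (μ m)) : IsStable p μ := by
  rintro m w ⟨-, hmw, hwm⟩
  have hyw : y w = rank (p.womenPref w) (μ.symm w) :=
    rank_eq_of_rank_eq hx hy (by simpa using hμ (μ.symm w))
  have hle : x m ≤ rank (p.menPref m) w :=
    hx ▸ bestAvailable_le (hyw ▸ (rank_lt_rank_iff.2 hwm).le)
  rw [hμ m] at hle
  exact not_lt.2 hle (rank_lt_rank_iff.2 hmw)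

lemma bestAvailable_eq_of_isStable (hμ : IsStable p μ) :
    bestAvailable p.menPref p.womenPref (fun w => rank (p.womenPref w) (μ.symm w)) =
      fun m => rank (p.menPref m) (μ m) := by
  funext m
  refine le_antisymm (bestAvailable_le (by simp)) (Finset.le_inf fun w hw => ?_)
  simp only [Finset.mem_filter, Finset.mem_univ, true_and] at hw
  by_contra hlt
  obtain rfl | hne := eq_or_ne (μ m) w
  · exact hlt le_rfl
  refine hμ m w ⟨hne, rank_lt_rank_iff.1 (not_le.1 hlt), rank_lt_rank_iff.1 (hw.lt_of_ne ?_)⟩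
  exact fun h => hne (by rw [rank_injective _ h, Equiv.apply_symm_apply])

theorem exists_manOptimal (p : Profile n) : ∃ μ, ManOptimal p μ := by
  let F : (Fin n → Fin (n + 1)) →o (Fin n → Fin (n + 1)) :=
    ⟨bestAvailable p.menPref p.womenPref ∘ bestAvailable p.womenPref p.menPref,
      bestAvailable_antitone.comp bestAvailable_antitone⟩
  obtain ⟨μ, hμ⟩ := exists_perm_of_bestAvailable_eq F.map_lfp rfl
  refine ⟨μ, isStable_of_bestAvailable_eq F.map_lfp rfl hμ, fun ν hν m => ?_⟩
  have hfixed : F (fun m => rank (p.menPref m) (ν m)) = fun m => rank (p.menPref m) (ν m) := by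
    have hwomen : bestAvailable p.womenPref p.menPref (fun m => rank (p.menPref m) (ν m)) =
        fun w => rank (p.womenPref w) (ν.symm w) :=
      bestAvailable_eq_of_isStable (isStable_swapProfile hν)
    change bestAvailable _ _ (bestAvailable _ _ _) = _
    rw [hwomen, bestAvailable_eq_of_isStable hν]
  have hle := F.lfp_le_fixed hfixed m
  rw [hμ m] at hle
  exact rank_le_rank_iff.1 hle

theorem exists_womanOptimal (p : Profile n) : ∃ μ, WomanOptimal p μ := by
  obtain ⟨μ, hstable, hopt⟩ := exists_manOptimal (swapProfile p)
  exact ⟨μ.symm, isStable_swapProfile hstable,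
    fun ν hν w => hopt ν.symm (isStable_swapProfile hν) w⟩

theorem _root_.ManOptimal.woman_pessimal {μM : Matching n} (hM : ManOptimal p μM)
    (hμ : IsStable p μ) (w : Fin n) : weaklyPrefers (p.womenPref w) (μ.symm w) (μM.symm w) := by
  obtain ⟨m, rfl⟩ := μM.surjective w
  rw [Equiv.symm_apply_apply]
  by_contra hlt
  obtain hm | hne := eq_or_ne (μ m) (μM m)
  · exact hlt (by simp [weaklyPrefers, ← hm])
  have hopt : weaklyPrefers (p.menPref m) (μM m) (μ m) := hM.2 μ hμ m
  exact hμ m (μM m) ⟨hne, hopt.lt_of_ne fun h => hne ((p.menPref m).symm.injective h).symm,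
    not_le.1 hlt⟩

end StableMarriage

theorem woman_optimal_exists_and_partners_between_general (n : ℕ) (p : Profile n) :
    ∃ μW : Matching n, WomanOptimal p μW ∧
      ∀ μM : Matching n, ManOptimal p μM →
        ∀ μ : Matching n, IsStable p μ → ∀ w : Fin n,
          weaklyPrefers (p.womenPref w) (μW.symm w) (μ.symm w) ∧
          weaklyPrefers (p.womenPref w) (μ.symm w) (μM.symm w) := by
  obtain ⟨μW, hW⟩ := StableMarriage.exists_womanOptimal p
  exact ⟨μW, hW, fun μM hM μ hμ w => ⟨hW.2 μ hμ w, hM.woman_pessimal hμ w⟩⟩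

/-- There exists a woman-optimal stable matching, and in every stable matching every
woman's partner lies weakly between her woman-optimal and her man-optimal partner. -/
theorem woman_optimal_exists_and_partners_between (n : ℕ) (hn : 1 ≤ n) (p : Profile n) :
    ∃ μW : Matching n, WomanOptimal p μW ∧
      ∀ μM : Matching n, ManOptimal p μM →
        ∀ μ : Matching n, IsStable p μ → ∀ w : Fin n,
          weaklyPrefers (p.womenPref w) (μW.symm w) (μ.symm w) ∧
          weaklyPrefers (p.womenPref w) (μ.symm w) (μM.symm w) :=
  woman_optimal_exists_and_partners_between_general n p
end

section
/- If a woman w has the same partner in the man-optimal stable matching and in the woman-optimal stable matching of a profile, then w has that same partner in every stable matching of the profile. -/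
open Equiv

theorem prefers_of_weaklyPrefers_of_ne {n : ℕ} {r : Pref n} {a b : Fin n}
    (hab : weaklyPrefers r a b) (hne : a ≠ b) : prefers r a b :=
  lt_of_le_of_ne hab fun h => hne (r.symm.injective h)

theorem ManOptimal.prefers_of_ne {n : ℕ} {p : Profile n} {μM μ : Matching n}
    (hM : ManOptimal p μM) (hμ : IsStable p μ) {m : Fin n} (hne : μM m ≠ μ m) :
    prefers (p.menPref m) (μM m) (μ m) :=
  prefers_of_weaklyPrefers_of_ne (hM.2 μ hμ m) hne

theorem WomanOptimal.prefers_of_ne {n : ℕ} {p : Profile n} {μW μ : Matching n}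
    (hW : WomanOptimal p μW) (hμ : IsStable p μ) {w : Fin n} (hne : μW.symm w ≠ μ.symm w) :
    prefers (p.womenPref w) (μW.symm w) (μ.symm w) :=
  prefers_of_weaklyPrefers_of_ne (hW.2 μ hμ w) hne

theorem same_extreme_partner_same_everywhere_general (n : ℕ) (p : Profile n)
    (μM μW : Matching n) (hM : ManOptimal p μM) (hW : WomanOptimal p μW)
    (w : Fin n) (h : μM.symm w = μW.symm w) :
    ∀ μ : Matching n, IsStable p μ → μ.symm w = μM.symm w := by
  intro μ hμ
  by_contra hne
  set m := μM.symm w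
  have hμm : μ m ≠ w := fun hw => hne (μ.eq_symm_apply.mpr hw).symm
  have hμMm : μM m = w := μM.apply_symm_apply w
  have hmen : prefers (p.menPref m) w (μ m) :=
    hμMm ▸ hM.prefers_of_ne hμ (hμMm ▸ hμm.symm)
  have hwomen : prefers (p.womenPref w) m (μ.symm w) :=
    h ▸ hW.prefers_of_ne hμ (h ▸ Ne.symm hne)
  exact hμ m w ⟨hμm, hmen, hwomen⟩

/-- If a woman has the same partner in the man-optimal and the woman-optimal stable
matchings, then she has that partner in every stable matching. -/
theorem same_extreme_partner_same_everywhere (n : ℕ) (hn : 1 ≤ n) (p : Profile n)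
    (μM μW : Matching n) (hM : ManOptimal p μM) (hW : WomanOptimal p μW)
    (w : Fin n) (h : μM.symm w = μW.symm w) :
    ∀ μ : Matching n, IsStable p μ → μ.symm w = μM.symm w :=
  same_extreme_partner_same_everywhere_general n p μM μW hM hW w h
end

section
/- Gender-neutralization preserves peer indifference (Theorem 3, second part): Let F be a stable marriage procedure that is peer indifferent, and define F' by: F'(p) = (F (swap p))⁻¹ if the male signature of p is lexicographically smaller than the female signature of p, and F'(p) = F(p) otherwise. Then F' is peer indifferent. -/
/- Relabeling men by `π` and women by `ρ` only reindexes and relabels each family of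
preferences, which the signature quotients out, so the gn-rule's test gives the same answer on
`p` and on its relabeling. On each branch of the test the output is then peer indifferent:
`F` is by hypothesis, and `p ↦ (F (swap p))⁻¹` is because swapping genders exchanges the
roles of `π` and `ρ`. -/

open Equiv

/-- The `(π, ρ)`-relabeling of a profile: man `π i` gets the preferences of man `i`
with every woman `w` replaced by `ρ w`, and woman `ρ j` gets the preferences of
woman `j` with every man `m` replaced by `π m`. -/
def relabelProfile {n : ℕ} (p : Profile n) (π ρ : Equiv.Perm (Fin n)) : Profile n :=
  ⟨fun i => (p.menPref (π.symm i)).trans ρ, fun j => (p.womenPref (ρ.symm j)).trans π⟩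

/-- A procedure is peer indifferent if relabeling the men by `π` and the women by `ρ`
transforms its output matching `μ` into `ρ ∘ μ ∘ π⁻¹`. -/
def PeerIndifferent {n : ℕ} (F : Profile n → Matching n) : Prop :=
  ∀ (p : Profile n) (π ρ : Equiv.Perm (Fin n)),
    F (relabelProfile p π ρ) = (π.symm.trans (F p)).trans ρ

lemma sigCandidate_relabel {n : ℕ} (L : Fin n → Pref n) (π ρ a b : Perm (Fin n)) :
    sigCandidate (fun i => (L (π.symm i)).trans ρ) a b
      = sigCandidate L (a.trans π.symm) (ρ.trans b) := by
  simp [sigCandidate, Equiv.trans_assoc]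

lemma signature_relabel {n : ℕ} (L : Fin n → Pref n) (π ρ : Perm (Fin n)) :
    signature (fun i => (L (π.symm i)).trans ρ) = signature L := by
  let e : Perm (Fin n) × Perm (Fin n) ≃ Perm (Fin n) × Perm (Fin n) :=
    (Equiv.mulLeft π.symm).prodCongr (Equiv.mulRight ρ)
  have hcand : (fun q : Perm (Fin n) × Perm (Fin n) =>
      sigCandidate (fun i => (L (π.symm i)).trans ρ) q.1 q.2)
      = (fun q => sigCandidate L q.1 q.2) ∘ e := by
    funext q
    exact sigCandidate_relabel L π ρ q.1 q.2
  unfold signature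
  congr 1
  rw [hcand, ← Finset.image_image, Finset.image_univ_equiv]

lemma swapProfile_relabelProfile {n : ℕ} (p : Profile n) (π ρ : Perm (Fin n)) :
    swapProfile (relabelProfile p π ρ) = relabelProfile (swapProfile p) ρ π := rfl

lemma PeerIndifferent.symm_swap {n : ℕ} {F : Profile n → Matching n} (hF : PeerIndifferent F) :
    PeerIndifferent (fun p => (F (swapProfile p)).symm) := by
  intro p π ρ
  beta_reduce
  rw [swapProfile_relabelProfile, hF]
  ext
  simp

lemma PeerIndifferent.ite {n : ℕ} {F G : Profile n → Matching n} (P : Profile n → Prop)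
    [DecidablePred P] (hP : ∀ p π ρ, P (relabelProfile p π ρ) ↔ P p)
    (hF : PeerIndifferent F) (hG : PeerIndifferent G) :
    PeerIndifferent (fun p => if P p then F p else G p) := by
  intro p π ρ
  by_cases h : P p
  · simp only [(hP p π ρ).mpr h, h, if_true, hF p π ρ]
  · simp only [mt (hP p π ρ).mp h, h, if_false, hG p π ρ]

theorem gn_rule_preserves_peer_indifference_general (n : ℕ) (F : Profile n → Matching n)
    (hPI : PeerIndifferent F) :
    PeerIndifferent (fun p : Profile n =>
      if signature p.menPref < signature p.womenPref then (F (swapProfile p)).symm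
      else F p) :=
  hPI.symm_swap.ite _ (fun p π ρ => by
    simp only [relabelProfile, signature_relabel p.menPref, signature_relabel p.womenPref]) hPI

/-- Gender-neutralization preserves peer indifference: if the stable marriage
procedure `F` is peer indifferent, then so is the gn-rule pre-processed procedure. -/
theorem gn_rule_preserves_peer_indifference (n : ℕ) (F : Profile n → Matching n)
    (hF : ∀ p : Profile n, IsStable p (F p)) (hPI : PeerIndifferent F) :
    PeerIndifferent (fun p : Profile n =>
      if signature p.menPref < signature p.womenPref then (F (swapProfile p)).symm
      else F p) :=
  gn_rule_preserves_peer_indifference_general n F hPI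
end
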